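/- Let K be a field of characteristic zero and σ the K-automorphism of K(t) sending t to t+1. Let f = a/b ∈ K(t) with a, b ∈ K[t], gcd(a,b) = 1, and let p ∈ K[t] be an irreducible factor of b. Let L = Σ_{i=0}^ρ ℓ_i σ^i with ℓ_i ∈ K[t], ℓ_ρ·ℓ_0 ≠ 0, and suppose σ^i(p) does not divide ℓ_ρ·ℓ_0 for any integer i. Then the local dispersion at p of L(f) := Σ_{i=0}^ρ ℓ_i·σ^i(f) equals dis_p(f) + ρ. -/

import Mathlib

/-
Let `σ^m(p)` and `σ^M(p)` be the extreme shifts of `p` dividing `b` (there are finitely many,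
as `K` has characteristic zero). Over the common denominator `∏_{i ≤ ρ} σ^i(b)` of `L(a/b)`,
every shift of `p` in the reduced denominator lies between `σ^m(p)` and `σ^(M+ρ)(p)`.
Conversely `σ^(M+ρ)(p)` divides only the factor `σ^ρ(b)`, so it divides every term of the
numerator except `ℓ_ρ σ^ρ(a) ∏_{i < ρ} σ^i(b)`, which it does not divide since it is prime to
`ℓ_ρ`, to `σ^ρ(a)` and to each `σ^i(b)` with `i < ρ`; hence it survives in the reduced
denominator, and symmetrically so does `σ^m(p)`, through `ℓ_0`.
-/
open Polynomial
open scoped Classical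

/-- The shift `σ^i` on `K[t]`, sending `q(t)` to `q(t + i)`. -/
noncomputable def shiftPoly {K : Type*} [Field K] (i : ℤ) (q : K[X]) : K[X] :=
  q.comp (X + C (i : K))

/-- The local dispersion of `u ∈ K[t]` at an irreducible `p`: the supremum of `|i - j|` over
integers `i, j` with `σ^i(p) ∣ u` and `σ^j(p) ∣ u` (`0` when no shift of `p` divides `u`,
since `sSup ∅ = 0`), with `dis_p(0) = ⊤`. -/
noncomputable def locDisp {K : Type*} [Field K] (p u : K[X]) : ℕ∞ :=
  if u = 0 then ⊤
  else sSup {d : ℕ∞ | ∃ i j : ℤ, shiftPoly i p ∣ u ∧ shiftPoly j p ∣ u ∧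
    d = ((i - j).natAbs : ℕ∞)}

section Shift

variable {K : Type*} [Field K]

lemma shiftPoly_eq_algEquivAevalXAddC (i : ℤ) :
    (shiftPoly i : K[X] → K[X]) = algEquivAevalXAddC (i : K) :=
  rfl

lemma shiftPoly_zero (q : K[X]) : shiftPoly 0 q = q := by
  simp [shiftPoly]

lemma shiftPoly_shiftPoly (i j : ℤ) (q : K[X]) :
    shiftPoly i (shiftPoly j q) = shiftPoly (i + j) q := by
  simp only [shiftPoly, comp_assoc, add_comp, X_comp, C_comp, Int.cast_add, C_add]
  ring_nf

lemma shiftPoly_ne_zero {q : K[X]} (hq : q ≠ 0) (i : ℤ) : shiftPoly i q ≠ 0 := by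
  rw [shiftPoly_eq_algEquivAevalXAddC]
  exact (map_ne_zero_iff _ (algEquivAevalXAddC _).injective).mpr hq

lemma shiftPoly_dvd_shiftPoly_iff (i : ℤ) {u v : K[X]} :
    shiftPoly i u ∣ shiftPoly i v ↔ u ∣ v := by
  rw [shiftPoly_eq_algEquivAevalXAddC]
  exact map_dvd_iff _

lemma shiftPoly_dvd_shiftPoly_iff_sub (i j : ℤ) {u v : K[X]} :
    shiftPoly j u ∣ shiftPoly i v ↔ shiftPoly (j - i) u ∣ v := by
  rw [← shiftPoly_dvd_shiftPoly_iff i (u := shiftPoly (j - i) u), shiftPoly_shiftPoly,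
    add_sub_cancel]

lemma Irreducible.shiftPoly {p : K[X]} (hp : Irreducible p) (i : ℤ) :
    Irreducible (shiftPoly i p) := by
  rw [shiftPoly_eq_algEquivAevalXAddC]
  exact hp.map _

lemma IsCoprime.shiftPoly {u v : K[X]} (h : IsCoprime u v) (i : ℤ) :
    IsCoprime (shiftPoly i u) (shiftPoly i v) :=
  h.map (algEquivAevalXAddC (i : K) : K[X] →+* K[X])

/-- If `p(α) = 0`, the shifts `σ^j(p)` dividing `u` give distinct roots `α - j` of `u`. -/
lemma setOf_shiftPoly_dvd_finite [CharZero K] {p u : K[X]} (hu : u ≠ 0) (hp : 0 < p.degree) :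
    {j : ℤ | shiftPoly j p ∣ u}.Finite := by
  let A := AlgebraicClosure K
  obtain ⟨α, hα⟩ := IsAlgClosed.exists_aeval_eq_zero A p hp.ne'
  have hinj : Function.Injective fun j : ℤ => α - algebraMap K A j :=
    (sub_right_injective.comp (algebraMap K A).injective).comp Int.cast_injective
  refine ((u.rootSet_finite A).preimage hinj.injOn).subset fun j hj => ?_
  obtain ⟨c, rfl⟩ := hj
  rw [Set.mem_preimage, mem_rootSet_of_ne hu, map_mul, shiftPoly, aeval_comp]
  simp [hα]

lemma locDisp_eq_of_isLeast_of_isGreatest {p u : K[X]} (hu : u ≠ 0) {m M : ℤ}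
    (hm : IsLeast {j | shiftPoly j p ∣ u} m) (hM : IsGreatest {j | shiftPoly j p ∣ u} M) :
    locDisp p u = ((M - m).natAbs : ℕ∞) := by
  rw [locDisp, if_neg hu]
  refine le_antisymm (sSup_le ?_) (le_sSup ⟨M, m, hM.1, hm.1, rfl⟩)
  rintro d ⟨i, j, hi, hj, rfl⟩
  have := hm.2 hi; have := hm.2 hj; have := hM.2 hi; have := hM.2 hj
  exact Nat.cast_le.mpr (by omega)

end Shift

section CommonDenominator

variable {K : Type*} [Field K] {ι : Type*} [DecidableEq ι] {s : Finset ι} {c B : ι → K[X]}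

lemma RatFunc.sum_div_eq_div_prod (hB : ∀ i ∈ s, B i ≠ 0) :
    ∑ i ∈ s, algebraMap K[X] (RatFunc K) (c i) / algebraMap K[X] (RatFunc K) (B i) =
      algebraMap K[X] (RatFunc K) (∑ i ∈ s, c i * ∏ j ∈ s.erase i, B j) /
        algebraMap K[X] (RatFunc K) (∏ j ∈ s, B j) := by
  rw [map_sum, Finset.sum_div]
  refine Finset.sum_congr rfl fun i hi => ?_
  have hrest : ∏ j ∈ s.erase i, B j ≠ 0 :=
    Finset.prod_ne_zero_iff.mpr fun j hj => hB j (Finset.mem_of_mem_erase hj)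
  rw [← Finset.mul_prod_erase s B hi, map_mul, map_mul,
    mul_div_mul_right _ _ (RatFunc.algebraMap_ne_zero hrest)]

lemma not_dvd_sum_mul_prod_erase {R : Type*} [CommRing R] {c B : ι → R} {q : R} (hq : Prime q)
    {k : ι} (hk : k ∈ s) (hck : ¬ q ∣ c k) (hBk : q ∣ B k) (hB : ∀ i ∈ s, i ≠ k → ¬ q ∣ B i) :
    ¬ q ∣ ∑ i ∈ s, c i * ∏ j ∈ s.erase i, B j := by
  have hothers : q ∣ ∑ i ∈ s.erase k, c i * ∏ j ∈ s.erase i, B j :=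
    Finset.dvd_sum fun i hi => dvd_mul_of_dvd_right
      (hBk.trans (Finset.dvd_prod_of_mem B
        (Finset.mem_erase.mpr ⟨(Finset.ne_of_mem_erase hi).symm, hk⟩))) _
  rw [← Finset.add_sum_erase s _ hk, dvd_add_left hothers, hq.dvd_mul, hq.dvd_finsetProd_iff]
  rintro (h | ⟨i, hi, hqi⟩)
  · exact hck h
  · exact hB i (Finset.mem_of_mem_erase hi) (Finset.ne_of_mem_erase hi) hqi

lemma RatFunc.prime_dvd_denom_of_eq_div {x : RatFunc K} {N D q : K[X]} (hD : D ≠ 0)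
    (hx : x = algebraMap K[X] (RatFunc K) N / algebraMap K[X] (RatFunc K) D) (hq : Prime q)
    (hqD : q ∣ D) (hqN : ¬ q ∣ N) : q ∣ x.denom := by
  have hcross := (RatFunc.num_mul_eq_mul_denom_iff hD).mpr hx
  exact (hq.dvd_or_dvd (hcross ▸ dvd_mul_of_dvd_right hqD _)).resolve_left hqN

end CommonDenominator

section Operator

variable {K : Type*} [Field K]

/-- `L(a/b)` for `L = ∑_{i ≤ ρ} ℓ_i σ^i`. -/
noncomputable def applyOperator (ρ : ℕ) (ℓ : ℕ → K[X]) (a b : K[X]) : RatFunc K :=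
  ∑ i ∈ Finset.range (ρ + 1),
    algebraMap K[X] (RatFunc K) (ℓ i * shiftPoly i a) / algebraMap K[X] (RatFunc K) (shiftPoly i b)

variable {ρ : ℕ} {ℓ : ℕ → K[X]} {a b : K[X]}

lemma applyOperator_eq_div_prod (hb : b ≠ 0) :
    applyOperator ρ ℓ a b =
      algebraMap K[X] (RatFunc K)
          (∑ i ∈ Finset.range (ρ + 1), ℓ i * shiftPoly i a *
            ∏ j ∈ (Finset.range (ρ + 1)).erase i, shiftPoly j b) /
        algebraMap K[X] (RatFunc K) (∏ i ∈ Finset.range (ρ + 1), shiftPoly i b) :=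
  RatFunc.sum_div_eq_div_prod (B := fun i : ℕ => shiftPoly i b) fun i _ => shiftPoly_ne_zero hb i

lemma denom_applyOperator_dvd (hb : b ≠ 0) :
    (applyOperator ρ ℓ a b).denom ∣ ∏ i ∈ Finset.range (ρ + 1), shiftPoly i b := by
  rw [applyOperator_eq_div_prod hb]
  exact RatFunc.denom_div_dvd _ _

lemma shiftPoly_dvd_denom_applyOperator {p : K[X]} (hb : b ≠ 0) (hab : IsCoprime a b)
    (hp : Irreducible p) {k : ℕ} {j : ℤ} (hk : k ≤ ρ) (hℓk : ¬ shiftPoly j p ∣ ℓ k)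
    (hbk : shiftPoly (j - k) p ∣ b) (hbi : ∀ i ≤ ρ, i ≠ k → ¬ shiftPoly (j - i) p ∣ b) :
    shiftPoly j p ∣ (applyOperator ρ ℓ a b).denom := by
  have hq : Prime (shiftPoly j p) := (hp.shiftPoly j).prime
  have hqbk : shiftPoly j p ∣ shiftPoly k b := (shiftPoly_dvd_shiftPoly_iff_sub _ _).mpr hbk
  have hkmem : k ∈ Finset.range (ρ + 1) := Finset.mem_range_succ_iff.mpr hk
  have hterm : ¬ shiftPoly j p ∣ ℓ k * shiftPoly k a := by
    rw [hq.dvd_mul]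
    rintro (h | h)
    · exact hℓk h
    · exact hq.not_isUnit ((hab.shiftPoly k).isUnit_of_dvd' h hqbk)
  have hothers : ∀ i ∈ Finset.range (ρ + 1), i ≠ k → ¬ shiftPoly j p ∣ shiftPoly i b :=
    fun i hi hik h =>
      hbi i (Finset.mem_range_succ_iff.mp hi) hik ((shiftPoly_dvd_shiftPoly_iff_sub _ _).mp h)
  have hD : ∏ i ∈ Finset.range (ρ + 1), shiftPoly i b ≠ 0 :=
    Finset.prod_ne_zero_iff.mpr fun i _ => shiftPoly_ne_zero hb i
  exact RatFunc.prime_dvd_denom_of_eq_div hD (applyOperator_eq_div_prod hb) hq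
    (hqbk.trans (Finset.dvd_prod_of_mem (fun i : ℕ => shiftPoly i b) hkmem))
    (not_dvd_sum_mul_prod_erase (c := fun i : ℕ => ℓ i * shiftPoly i a)
      (B := fun i : ℕ => shiftPoly i b) hq hkmem hterm hqbk hothers)

end Operator

theorem locDisp_apply_operator {K : Type*} [Field K] [CharZero K]
    (a b p : K[X]) (hb : b ≠ 0) (hab : IsCoprime a b)
    (hp : Irreducible p) (hpb : p ∣ b)
    (ρ : ℕ) (ℓ : ℕ → K[X])
    (hℓp : ∀ i : ℤ, ¬ shiftPoly i p ∣ ℓ ρ * ℓ 0)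
    (Lf : RatFunc K)
    (hLf : Lf = ∑ i ∈ Finset.range (ρ + 1),
      algebraMap K[X] (RatFunc K) (ℓ i * shiftPoly i a) /
        algebraMap K[X] (RatFunc K) (shiftPoly i b)) :
    locDisp p Lf.denom = locDisp p b + (ρ : ℕ∞) := by
  change Lf = applyOperator ρ ℓ a b at hLf
  subst hLf
  have hfin := setOf_shiftPoly_dvd_finite hb (degree_pos_of_irreducible hp)
  have hne : {j : ℤ | shiftPoly j p ∣ b}.Nonempty := ⟨0, by simpa [shiftPoly_zero] using hpb⟩
  obtain ⟨m, hm⟩ := hfin.bddBelow.exists_isLeast_of_nonempty hne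
  obtain ⟨M, hM⟩ := hfin.bddAbove.exists_isGreatest_of_nonempty hne
  have hbottom : shiftPoly m p ∣ (applyOperator ρ ℓ a b).denom :=
    shiftPoly_dvd_denom_applyOperator hb hab hp (Nat.zero_le ρ)
      (fun h => hℓp m (dvd_mul_of_dvd_right h _)) (by simpa using hm.1)
      (fun i _ hi h => by have := hm.2 h; omega)
  have htop : shiftPoly (M + ρ) p ∣ (applyOperator ρ ℓ a b).denom :=
    shiftPoly_dvd_denom_applyOperator hb hab hp le_rfl
      (fun h => hℓp _ (dvd_mul_of_dvd_left h _)) (by simpa using hM.1)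
      (fun i hi hiρ h => by have := hM.2 h; omega)
  have hbounds : ∀ j, shiftPoly j p ∣ (applyOperator ρ ℓ a b).denom → m ≤ j ∧ j ≤ M + ρ := by
    intro j hj
    obtain ⟨i, hi, hji⟩ :=
      ((hp.shiftPoly j).prime.exists_mem_finset_dvd (hj.trans (denom_applyOperator_dvd hb)))
    rw [shiftPoly_dvd_shiftPoly_iff_sub] at hji
    have := hm.2 hji; have := hM.2 hji; have := Finset.mem_range_succ_iff.mp hi
    omega
  rw [locDisp_eq_of_isLeast_of_isGreatest (RatFunc.denom_ne_zero _)
      ⟨hbottom, fun j hj => (hbounds j hj).1⟩ ⟨htop, fun j hj => (hbounds j hj).2⟩,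
    locDisp_eq_of_isLeast_of_isGreatest hb hm hM, ← Nat.cast_add]
  have := hm.2 hM.1
  congr 1
  omega
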